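/- arXiv:2502.18455 — 2 statements merged into one kernel-verified Lean document; each statement's English description precedes it below -/
import Mathlib

section
/- Let A, V : (−∞, T] → (0,∞) be C¹ functions with A' = A, and suppose that for each t, A(t) ≤ (∫ H²)^{1/3} (∫ H^{-1})^{2/3} where V'(t) = ∫ H^{-1} and ∫ H² < 16π. If A(t)^{3/2} − (36π)^{1/2} V(t) → 0 as t → −∞, then A(t)^{3/2} < (36π)^{1/2} V(t) for all t ∈ (−∞, T]. -/
open Filter Set

/-!
The deficit `f = A^{3/2} - √(36π) V` is strictly decreasing: since `A' = A`, its derivative is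
`(3/2) A^{3/2} - √(36π) V'`, and raising the Hölder bound to the power `3/2` gives
`A^{3/2} ≤ (∫H²)^{1/2} ∫H⁻¹ < √(16π) V'`, where `(3/2)√(16π) = √(36π)`. A strictly decreasing
function tending to `0` at `-∞` is negative.
-/

theorem StrictAntiOn.lt_of_tendsto_atBot {α β : Type*} [LinearOrder α] [NoMinOrder α]
    [TopologicalSpace β] [LinearOrder β] [OrderClosedTopology β] {f : α → β} {T : α} {L : β}
    (hf : StrictAntiOn f (Iic T)) (hlim : Tendsto f atBot (nhds L)) {t : α} (ht : t ≤ T) :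
    f t < L := by
  have : Nonempty α := ⟨t⟩
  obtain ⟨s, hst⟩ := exists_lt t
  have hs : s ≤ T := hst.le.trans ht
  have hfs : f s ≤ L := ge_of_tendsto hlim <| by
    filter_upwards [eventually_lt_atBot s] with u hu
    exact (hf (hu.le.trans hs) hs hu).le
  exact (hf hs ht hst).trans_le hfs

theorem strictAntiOn_Iic_of_hasDerivAt_neg {f f' : ℝ → ℝ} {T : ℝ}
    (hf : ∀ t ≤ T, HasDerivAt f (f' t) t) (hf' : ∀ t ≤ T, f' t < 0) :
    StrictAntiOn f (Iic T) := by
  refine strictAntiOn_of_hasDerivWithinAt_neg (f' := f') (convex_Iic T)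
    (fun t ht => (hf t ht).continuousAt.continuousWithinAt) (fun t ht => ?_) (fun t ht => ?_)
  all_goals rw [interior_Iic] at ht
  · exact (hf t ht.le).hasDerivWithinAt
  · exact hf' t ht.le

theorem HasDerivAt.rpow_const_of_hasDerivAt_self {A : ℝ → ℝ} {t : ℝ} (hA : HasDerivAt A (A t) t)
    (hpos : 0 < A t) (p : ℝ) : HasDerivAt (fun s => A s ^ p) (p * A t ^ p) t := by
  convert hA.rpow_const (p := p) (Or.inl hpos.ne') using 1
  rw [Real.rpow_sub_one hpos.ne']
  field_simp

theorem Real.rpow_three_halves_le_sqrt_mul {a h w : ℝ} (ha : 0 ≤ a) (hh : 0 ≤ h) (hw : 0 ≤ w)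
    (hholder : a ≤ h ^ ((1:ℝ)/3) * w ^ ((2:ℝ)/3)) : a ^ ((3:ℝ)/2) ≤ √h * w := by
  calc a ^ ((3:ℝ)/2) ≤ (h ^ ((1:ℝ)/3) * w ^ ((2:ℝ)/3)) ^ ((3:ℝ)/2) :=
        Real.rpow_le_rpow ha hholder (by norm_num)
    _ = √h * w := by
        rw [Real.mul_rpow (by positivity) (by positivity), ← Real.rpow_mul hh,
          ← Real.rpow_mul hw, Real.sqrt_eq_rpow]
        norm_num

theorem Real.sqrt_thirtySix_mul_pi : √(36 * π) = 3 / 2 * √(16 * π) := by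
  rw [show (36 : ℝ) * π = (3 / 2) ^ 2 * (16 * π) by ring, Real.sqrt_mul (by positivity),
    Real.sqrt_sq (by norm_num)]

theorem three_halves_rpow_lt_sqrt_thirtySix_pi_mul {a h w : ℝ} (ha : 0 ≤ a) (hh : 0 ≤ h)
    (hw : 0 < w) (hholder : a ≤ h ^ ((1:ℝ)/3) * w ^ ((2:ℝ)/3)) (h16 : h < 16 * π) :
    3 / 2 * a ^ ((3:ℝ)/2) < √(36 * π) * w := by
  have hsqrt : √h < √(16 * π) := Real.sqrt_lt_sqrt hh h16
  calc 3 / 2 * a ^ ((3:ℝ)/2) ≤ 3 / 2 * (√h * w) := by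
        gcongr; exact Real.rpow_three_halves_le_sqrt_mul ha hh hw.le hholder
    _ < 3 / 2 * (√(16 * π) * w) := by gcongr
    _ = √(36 * π) * w := by rw [Real.sqrt_thirtySix_mul_pi]; ring

theorem stmt3_general (T : ℝ) (A V Hsq Hinv : ℝ → ℝ)
    (hApos : ∀ t ≤ T, 0 < A t)
    (hHsqnn : ∀ t ≤ T, 0 ≤ Hsq t)
    (hHinvpos : ∀ t ≤ T, 0 < Hinv t)
    (hA' : ∀ t ≤ T, HasDerivAt A (A t) t)
    (hV' : ∀ t ≤ T, HasDerivAt V (Hinv t) t)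
    (hHolder : ∀ t ≤ T, A t ≤ Hsq t ^ ((1:ℝ)/3) * Hinv t ^ ((2:ℝ)/3))
    (hHsq : ∀ t ≤ T, Hsq t < 16 * Real.pi)
    (hlim : Tendsto (fun t => A t ^ ((3:ℝ)/2) - Real.sqrt (36 * Real.pi) * V t)
      atBot (nhds 0)) :
    ∀ t ≤ T, A t ^ ((3:ℝ)/2) < Real.sqrt (36 * Real.pi) * V t := by
  have hdecr : StrictAntiOn (fun t => A t ^ ((3:ℝ)/2) - √(36 * Real.pi) * V t) (Iic T) :=
    strictAntiOn_Iic_of_hasDerivAt_neg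
      (fun t ht => ((hA' t ht).rpow_const_of_hasDerivAt_self (hApos t ht) _).sub
        ((hV' t ht).const_mul _))
      (fun t ht => sub_neg.2 <| three_halves_rpow_lt_sqrt_thirtySix_pi_mul (hApos t ht).le
        (hHsqnn t ht) (hHinvpos t ht) (hHolder t ht) (hHsq t ht))
  exact fun t ht => sub_neg.1 (hdecr.lt_of_tendsto_atBot hlim ht)

theorem stmt3 (T : ℝ) (A V Hsq Hinv : ℝ → ℝ)
    (hApos : ∀ t ≤ T, 0 < A t)
    (hVpos : ∀ t ≤ T, 0 < V t)
    (hHsqnn : ∀ t ≤ T, 0 ≤ Hsq t)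
    (hHinvpos : ∀ t ≤ T, 0 < Hinv t)
    (hA' : ∀ t ≤ T, HasDerivAt A (A t) t)
    (hV' : ∀ t ≤ T, HasDerivAt V (Hinv t) t)
    (hHolder : ∀ t ≤ T, A t ≤ Hsq t ^ ((1:ℝ)/3) * Hinv t ^ ((2:ℝ)/3))
    (hHsq : ∀ t ≤ T, Hsq t < 16 * Real.pi)
    (hlim : Tendsto (fun t => A t ^ ((3:ℝ)/2) - Real.sqrt (36 * Real.pi) * V t)
      atBot (nhds 0)) :
    ∀ t ≤ T, A t ^ ((3:ℝ)/2) < Real.sqrt (36 * Real.pi) * V t :=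
  stmt3_general T A V Hsq Hinv hApos hHsqnn hHinvpos hA' hV' hHolder hHsq hlim
end

section
/- For c > 0, the mountain pass min-max value of the functional A^c in Euclidean ℝ³ equals ω_c(ℝ³) = (4π/3)(2/c)², attained along the family of concentric round balls at the ball of radius 2/c. -/
/-!
Along the concentric balls the action `4πr² − c·(4π/3)r³` rises to its maximum `(4π/3)(2/c)²`
at `r = 2/c` and becomes negative for `r > 3/c`, which gives the upper bound. Conversely, the
isoperimetric inequality makes the action negative only on sets of volume larger than that of the
ball of radius `2/c`; by continuity of the volume every admissible path crosses this volume, and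
there the isoperimetric inequality bounds the action below by that of the ball of radius `2/c`.
-/

open Set Real

/-- The mountain pass min-max value of a functional F over continuous paths
{Ω_t}_{t∈[0,1]} with Ω₀ = x₀ (the empty set) and F(Ω₁) < 0. -/
noncomputable def mountainPassValue {X : Type*} [TopologicalSpace X]
    (x₀ : X) (F : X → ℝ) : EReal :=
  sInf {c : EReal | ∃ γ : ℝ → X, ContinuousOn γ (Set.Icc 0 1) ∧ γ 0 = x₀ ∧
    F (γ 1) < 0 ∧ c = ⨆ t : Set.Icc (0:ℝ) 1, (F (γ t.1) : EReal)}

section MountainPass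

variable {X : Type*} [TopologicalSpace X] {x₀ : X} {F : X → ℝ}

theorem mountainPassValue_le_of_path {M : ℝ} (γ : ℝ → X) (hγ : ContinuousOn γ (Icc 0 1))
    (hγ0 : γ 0 = x₀) (hγ1 : F (γ 1) < 0) (hle : ∀ t ∈ Icc (0 : ℝ) 1, F (γ t) ≤ M) :
    mountainPassValue x₀ F ≤ M :=
  sInf_le_of_le ⟨γ, hγ, hγ0, hγ1, rfl⟩ <|
    iSup_le fun t => EReal.coe_le_coe_iff.mpr (hle t.1 t.2)

/-- By the intermediate value theorem every admissible path meets the level set `{G = a}`. -/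
theorem le_mountainPassValue_of_separating {G : X → ℝ} (hG : Continuous G) {a M : ℝ}
    (hG₀ : G x₀ ≤ a) (hneg : ∀ x, F x < 0 → a ≤ G x) (hlevel : ∀ x, G x = a → M ≤ F x) :
    (M : EReal) ≤ mountainPassValue x₀ F := by
  refine le_sInf ?_
  rintro _ ⟨γ, hγ, hγ0, hγ1, rfl⟩
  have hcross : a ∈ Icc (G (γ 0)) (G (γ 1)) := ⟨hγ0 ▸ hG₀, hneg _ hγ1⟩
  obtain ⟨t, ht, hGt⟩ :=
    intermediate_value_Icc zero_le_one (hG.comp_continuousOn hγ) hcross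
  exact (EReal.coe_le_coe_iff.mpr (hlevel _ hGt)).trans
    (le_iSup (fun s : Icc (0 : ℝ) 1 => (F (γ s) : EReal)) ⟨t, ht⟩)

end MountainPass

section Balls

noncomputable def ballAction (c r : ℝ) : ℝ := 4 * π * r ^ 2 - c * ((4 * π / 3) * r ^ 3)

theorem ballAction_two_div {c : ℝ} (hc : c ≠ 0) :
    ballAction c (2 / c) = (4 * π / 3) * (2 / c) ^ 2 := by
  unfold ballAction
  field_simp
  ring

theorem ballAction_le {c r : ℝ} (hc : 0 < c) (hr : 0 ≤ r) :
    ballAction c r ≤ (4 * π / 3) * (2 / c) ^ 2 := by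
  have hgap : (4 * π / 3) * (2 / c) ^ 2 - ballAction c r
      = 4 * π / (3 * c ^ 2) * ((c * r + 1) * (c * r - 2) ^ 2) := by
    unfold ballAction
    field_simp
    ring
  have : 0 ≤ 4 * π / (3 * c ^ 2) * ((c * r + 1) * (c * r - 2) ^ 2) := by positivity
  linarith

theorem ballAction_neg {c r : ℝ} (hr₀ : 0 < r) (hr : 3 < c * r) : ballAction c r < 0 := by
  have : ballAction c r = 4 * π / 3 * r ^ 2 * (3 - c * r) := by unfold ballAction; ring
  rw [this]
  exact mul_neg_of_pos_of_neg (by positivity) (by linarith)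

end Balls

section Isoperimetric

noncomputable def isoperimetricBound (v : ℝ) : ℝ := (4 * π) ^ ((1 : ℝ) / 3) * (3 * v) ^ ((2 : ℝ) / 3)

theorem isoperimetricBound_pow_three {v : ℝ} (hv : 0 ≤ v) :
    isoperimetricBound v ^ 3 = 36 * π * v ^ 2 := by
  have h4 : (0 : ℝ) ≤ 4 * π := by positivity
  have h3 : (0 : ℝ) ≤ 3 * v := by linarith
  rw [isoperimetricBound, mul_pow, ← rpow_natCast ((4 * π) ^ ((1 : ℝ) / 3)) 3,
    ← rpow_natCast ((3 * v) ^ ((2 : ℝ) / 3)) 3, ← rpow_mul h4, ← rpow_mul h3]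
  norm_num
  ring

theorem isoperimetricBound_ball {ρ : ℝ} (hρ : 0 ≤ ρ) :
    isoperimetricBound ((4 * π / 3) * ρ ^ 3) = 4 * π * ρ ^ 2 := by
  have h4 : (0 : ℝ) ≤ 4 * π := by positivity
  have hvol : 3 * ((4 * π / 3) * ρ ^ 3) = 4 * π * ρ ^ 3 := by ring
  rw [isoperimetricBound, hvol, mul_rpow h4 (by positivity), ← rpow_natCast ρ 3,
    ← rpow_mul hρ, ← mul_assoc, ← rpow_add (by positivity)]
  norm_num

/-- Cubing `isoperimetricBound v < c v` gives `36π < c³ v`, while the ball of radius `2/c` has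
`c³ · vol = 32π/3`. -/
theorem ball_volume_le_of_isoperimetricBound_lt {c v : ℝ} (hc : 0 < c) (hv : 0 ≤ v)
    (hlt : isoperimetricBound v < c * v) : (4 * π / 3) * (2 / c) ^ 3 ≤ v := by
  have hcube : 36 * π * v ^ 2 < c ^ 3 * v ^ 3 := by
    rw [← isoperimetricBound_pow_three hv, ← mul_pow]
    exact pow_lt_pow_left₀ hlt (by unfold isoperimetricBound; positivity) (by norm_num)
  have hvpos : 0 < v := by
    rcases hv.lt_or_eq with h | rfl
    · exact h
    · simp at hcube
  have h36 : 36 * π < c ^ 3 * v := by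
    have : 0 < v ^ 2 := by positivity
    nlinarith
  have hcrit : (4 * π / 3) * (2 / c) ^ 3 * c ^ 3 = 32 * π / 3 := by field_simp; ring
  have hc3 : 0 < c ^ 3 := by positivity
  nlinarith [pi_pos]

end Isoperimetric

theorem stmt17_general {X : Type*} [TopologicalSpace X] (x₀ : X)
    (Area Vol : X → ℝ) (hVolCont : Continuous Vol)
    (hV0 : Vol x₀ = 0) (hVnn : ∀ x, 0 ≤ Vol x)
    (hiso : ∀ x, (4 * Real.pi) ^ ((1:ℝ)/3) * (3 * Vol x) ^ ((2:ℝ)/3) ≤ Area x)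
    (balls : ℝ → X) (hballs : Continuous balls) (hb0 : balls 0 = x₀)
    (hbA : ∀ r : ℝ, 0 ≤ r → Area (balls r) = 4 * Real.pi * r ^ 2)
    (hbV : ∀ r : ℝ, 0 ≤ r → Vol (balls r) = (4 * Real.pi / 3) * r ^ 3)
    (c : ℝ) (hc : 0 < c) :
    mountainPassValue x₀ (fun x => Area x - c * Vol x) =
      (((4 * Real.pi / 3) * (2 / c) ^ 2 : ℝ) : EReal) := by
  have hball : ∀ r, 0 ≤ r → Area (balls r) - c * Vol (balls r) = ballAction c r := by
    intro r hr
    rw [hbA r hr, hbV r hr, ballAction]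
  apply le_antisymm
  · refine mountainPassValue_le_of_path (fun t => balls (4 / c * t))
      (hballs.comp (continuous_const_mul _)).continuousOn (by simp only [mul_zero, hb0]) ?_ ?_
    · rw [hball _ (by positivity)]
      exact ballAction_neg (by positivity) (by field_simp; norm_num)
    · rintro t ⟨ht, -⟩
      rw [hball _ (by positivity)]
      exact ballAction_le hc (by positivity)
  · refine le_mountainPassValue_of_separating hVolCont (a := (4 * π / 3) * (2 / c) ^ 3)
      (by rw [hV0]; positivity) (fun x hx => ?_) (fun x hx => ?_)
    · have hA : isoperimetricBound (Vol x) ≤ Area x := hiso x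
      exact ball_volume_le_of_isoperimetricBound_lt hc (hVnn x) (by linarith)
    · have hA : isoperimetricBound (Vol x) ≤ Area x := hiso x
      rw [hx] at hA ⊢
      rw [← ballAction_two_div hc.ne', ballAction, ← isoperimetricBound_ball (by positivity)]
      linarith

theorem stmt17 {X : Type*} [TopologicalSpace X] (x₀ : X)
    (Area Vol : X → ℝ) (hVolCont : Continuous Vol)
    (hA0 : Area x₀ = 0) (hV0 : Vol x₀ = 0) (hVnn : ∀ x, 0 ≤ Vol x)
    (hiso : ∀ x, (4 * Real.pi) ^ ((1:ℝ)/3) * (3 * Vol x) ^ ((2:ℝ)/3) ≤ Area x)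
    (balls : ℝ → X) (hballs : Continuous balls) (hb0 : balls 0 = x₀)
    (hbA : ∀ r : ℝ, 0 ≤ r → Area (balls r) = 4 * Real.pi * r ^ 2)
    (hbV : ∀ r : ℝ, 0 ≤ r → Vol (balls r) = (4 * Real.pi / 3) * r ^ 3)
    (c : ℝ) (hc : 0 < c) :
    mountainPassValue x₀ (fun x => Area x - c * Vol x) =
      (((4 * Real.pi / 3) * (2 / c) ^ 2 : ℝ) : EReal) :=
  stmt17_general x₀ Area Vol hVolCont hV0 hVnn hiso balls hballs hb0 hbA hbV c hc
end
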